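/- arXiv:2505.18480 — 4 statements merged into one kernel-verified Lean document; each statement's English description precedes it below -/
import Mathlib

section
/- Under the hypotheses of the block-triangular kernel theorem, the kernel of T equals the image of the kernel of T_* under the map I_A − S ∘ R, i.e. ker T = (I_A − S∘R)(ker T_*), where S = S_* ∘ ∑_{l=0}^{s}(−R∘S_*)^l. -/
section Aux
variable {K V W : Type*} [Field K] [AddCommGroup V] [Module K V]
  [AddCommGroup W] [Module K W]

noncomputable def Dsup (C : ℕ → Submodule K V) (m : ℕ) : Submodule K V :=
  ⨆ l ∈ Set.Ici m, C l

lemma le_Dsup {C : ℕ → Submodule K V} {m l : ℕ} (h : m ≤ l) : C l ≤ Dsup C m :=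
  le_biSup _ h

lemma Dsup_anti {C : ℕ → Submodule K V} {m m' : ℕ} (h : m ≤ m') :
    Dsup C m' ≤ Dsup C m :=
  biSup_mono (fun _ hl => le_trans h hl)

lemma map_Dsup_le {f : V →ₗ[K] W} {C : ℕ → Submodule K V} {C' : ℕ → Submodule K W}
    {m k : ℕ} (h : ∀ l, m ≤ l → Submodule.map f (C l) ≤ Dsup C' k) :
    Submodule.map f (Dsup C m) ≤ Dsup C' k := by
  rw [Submodule.map_le_iff_le_comap]
  exact iSup₂_le fun l hl => Submodule.map_le_iff_le_comap.mp (h l hl)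

lemma Dsup_bot {C : ℕ → Submodule K V} {s : ℕ} (htop : ∀ n, s < n → C n = ⊥) :
    Dsup C (s + 1) = ⊥ := by
  refine le_bot_iff.mp (iSup₂_le fun l hl => ?_)
  rw [htop l (by exact hl)]

lemma nil_of_raising {C : ℕ → Submodule K V} {s : ℕ}
    (hC : ⨆ l, C l = ⊤) (htop : ∀ n, s < n → C n = ⊥)
    (f : Module.End K V) (hf : ∀ n, ∀ x ∈ C n, f x ∈ Dsup C (n + 1)) :
    f ^ (s + 1) = 0 := by
  have hstep : ∀ m (x : V), x ∈ Dsup C m → f x ∈ Dsup C (m + 1) := by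
    intro m x hx
    refine map_Dsup_le (f := f) (C := C) (C' := C) (m := m) (k := m + 1)
      (fun l hl => ?_) (Submodule.mem_map_of_mem hx)
    rintro y ⟨z, hz, rfl⟩
    exact Dsup_anti (by omega) (hf l z hz)
  have hiter : ∀ k m (x : V), x ∈ Dsup C m → (f ^ k) x ∈ Dsup C (m + k) := by
    intro k
    induction k with
    | zero => intro m x hx; simpa using hx
    | succ k ih =>
      intro m x hx
      rw [pow_succ, Module.End.mul_apply]
      have := ih (m + 1) (f x) (hstep m x hx)
      simpa [Nat.add_assoc, Nat.add_comm 1 k] using this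
  ext x
  have hx0 : x ∈ Dsup C 0 := by
    have : (⊤ : Submodule K V) ≤ Dsup C 0 := by
      rw [← hC]; exact iSup_le fun l => le_Dsup (Nat.zero_le l)
    exact this Submodule.mem_top
  have := hiter (s + 1) 0 x hx0
  rw [Nat.zero_add, Dsup_bot htop] at this
  simpa using this

end Aux

/-- `ker T = (I_A − S∘R)(ker T_*)` where `S = S_* ∘ ∑_{l=0}^{s}(−R∘S_*)^l`. -/
theorem stmt_4 {K VA VB : Type*} [Field K]
    [AddCommGroup VA] [Module K VA] [AddCommGroup VB] [Module K VB]
    (s : ℕ) (hs : 0 < s)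
    (A : ℕ → Submodule K VA) (B : ℕ → Submodule K VB)
    (hA : DirectSum.IsInternal A) (hAtop : ∀ n, s < n → A n = ⊥)
    (hB : DirectSum.IsInternal B) (hBtop : ∀ n, s < n → B n = ⊥)
    (Tstar R : VA →ₗ[K] VB)
    (hT1 : ∀ n, ∀ x ∈ A n, Tstar x ∈ B n)
    (hT2 : Function.Surjective Tstar)
    (hR1 : ∀ n < s, ∀ x ∈ A n, R x ∈ ⨆ l ∈ Set.Icc (n + 1) s, B l)
    (hR2 : ∀ x ∈ A s, R x = 0)
    (Sstar : VB →ₗ[K] VA)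
    (hS1 : Tstar ∘ₗ Sstar = LinearMap.id)
    (hS2 : ∀ n ≤ s, ∀ y ∈ B n, Sstar y ∈ A n) :
    LinearMap.ker (Tstar + R) =
      Submodule.map
        ((LinearMap.id : VA →ₗ[K] VA) -
          (Sstar ∘ₗ (∑ l ∈ Finset.range (s + 1), (-(R ∘ₗ Sstar) : Module.End K VB) ^ l)) ∘ₗ R)
        (LinearMap.ker Tstar) := by
  classical
  set N : Module.End K VB := R ∘ₗ Sstar with hNdef
  have hBsup : ⨆ l, B l = ⊤ := hB.submodule_iSup_eq_top
  have hAsup : ⨆ l, A l = ⊤ := hA.submodule_iSup_eq_top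
  have hIcc : ∀ n : ℕ, (⨆ l ∈ Set.Icc (n + 1) s, B l) ≤ Dsup B (n + 1) :=
    fun n => iSup₂_le fun l hl => le_Dsup hl.1
  -- N raises degree
  have hNraise : ∀ n, ∀ y ∈ B n, N y ∈ Dsup B (n + 1) := by
    intro n y hy
    rcases lt_trichotomy n s with h | h | h
    · have hy' : Sstar y ∈ A n := hS2 n h.le y hy
      exact hIcc n (hR1 n h (Sstar y) hy')
    · subst h
      have : R (Sstar y) = 0 := hR2 _ (hS2 n le_rfl y hy)
      show R (Sstar y) ∈ _
      rw [this]; exact Submodule.zero_mem _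
    · have : y = 0 := by rw [hBtop n h] at hy; simpa using hy
      subst this; simp
  have hNnil : N ^ (s + 1) = 0 := nil_of_raising hBsup hBtop N hNraise
  set P : Module.End K VB := ∑ l ∈ Finset.range (s + 1), (-N) ^ l with hPdef
  -- (1 + N) * P = 1
  have hgeom : ((-N) - 1) * P = (-N) ^ (s + 1) - 1 := mul_geom_sum (-N) (s + 1)
  have hNP : (1 + N) * P = 1 := by
    have h0 : (-N) ^ (s + 1) = 0 := by rw [neg_pow, hNnil, mul_zero]
    have := hgeom
    rw [h0, zero_sub] at this
    have : (1 - (-N)) * P = 1 := by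
      have := congrArg Neg.neg this
      rw [← neg_mul, neg_sub] at this
      simpa using this
    simpa [sub_neg_eq_add] using this
  -- P preserves Dsup B m
  have hNmem : ∀ m (y : VB), y ∈ Dsup B m → N y ∈ Dsup B m := by
    intro m y hy
    refine map_Dsup_le (f := N) (C := B) (C' := B) (m := m) (k := m)
      (fun l hl => ?_) (Submodule.mem_map_of_mem hy)
    rintro z ⟨w, hw, rfl⟩
    exact Dsup_anti (Nat.le_succ_of_le hl) (hNraise l w hw)
  have hPmem : ∀ m (y : VB), y ∈ Dsup B m → P y ∈ Dsup B m := by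
    intro m y hy
    have hpow : ∀ k : ℕ, ((-N) ^ k) y ∈ Dsup B m := by
      intro k
      induction k with
      | zero => simpa using hy
      | succ k ih =>
        rw [pow_succ']
        rw [Module.End.mul_apply, LinearMap.neg_apply]
        exact Submodule.neg_mem _ (hNmem m _ ih)
    rw [hPdef, LinearMap.sum_apply]
    exact Submodule.sum_mem _ fun k _ => hpow k
  -- Sstar maps Dsup B m into Dsup A m
  have hSstarmem : ∀ m (y : VB), y ∈ Dsup B m → Sstar y ∈ Dsup A m := by
    intro m y hy
    refine map_Dsup_le (f := Sstar) (C := B) (C' := A) (m := m) (k := m)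
      (fun l hl => ?_) (Submodule.mem_map_of_mem hy)
    rintro z ⟨w, hw, rfl⟩
    by_cases hls : l ≤ s
    · exact le_Dsup hl (hS2 l hls w hw)
    · have : w = 0 := by rw [hBtop l (by omega)] at hw; simpa using hw
      subst this; simp
  set S : VB →ₗ[K] VA := Sstar ∘ₗ P with hSdef
  set M : Module.End K VA := S ∘ₗ R with hMdef
  -- M raises degree
  have hMraise : ∀ n, ∀ x ∈ A n, M x ∈ Dsup A (n + 1) := by
    intro n x hx
    rcases lt_trichotomy n s with h | h | h
    · have hR : R x ∈ Dsup B (n + 1) := hIcc n (hR1 n h x hx)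
      exact hSstarmem (n + 1) _ (hPmem (n + 1) _ hR)
    · subst h
      show S (R x) ∈ _
      rw [hR2 x hx]; simp
    · have : x = 0 := by rw [hAtop n h] at hx; simpa using hx
      subst this; simp
  have hMnil : M ^ (s + 1) = 0 := nil_of_raising hAsup hAtop M hMraise
  set Q : Module.End K VA := ∑ k ∈ Finset.range (s + 1), M ^ k with hQdef
  have hQM : Q * (1 - M) = 1 := by
    have := geom_sum_mul M (s + 1)
    rw [hMnil, zero_sub] at this
    have := congrArg Neg.neg this
    rw [← mul_neg, neg_sub] at this
    simpa using this
  have hMQ : (1 - M) * Q = 1 := by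
    have hc : Commute (1 - M) Q := by
      refine Commute.sub_left (Commute.one_left Q) ?_
      exact Commute.sum_right _ _ _ fun k _ => (Commute.pow_right (Commute.refl M) k)
    rw [hc.eq, hQM]
  -- T ∘ S = id pointwise
  have hTS : ∀ y : VB, Tstar (S y) + R (S y) = y := by
    intro y
    have h1 : Tstar (Sstar (P y)) = P y := LinearMap.congr_fun hS1 (P y)
    have h2 : R (Sstar (P y)) = N (P y) := rfl
    show Tstar (Sstar (P y)) + R (Sstar (P y)) = y
    rw [h1, h2]
    have := LinearMap.congr_fun hNP y
    simpa [Module.End.mul_apply, LinearMap.add_apply] using this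
  -- key identity : T ∘ (1 - M) = Tstar pointwise
  have hkey : ∀ w : VA, Tstar ((1 - M) w) + R ((1 - M) w) = Tstar w := by
    intro w
    have h1 : (1 - M) w = w - S (R w) := by
      simp [LinearMap.sub_apply, hMdef, LinearMap.comp_apply]
    rw [h1, map_sub, map_sub, sub_add_sub_comm, hTS (R w), add_sub_cancel_right]
  -- identify the map in the statement with (1 - M)
  have hΦ : ((LinearMap.id : VA →ₗ[K] VA) -
      (Sstar ∘ₗ (∑ l ∈ Finset.range (s + 1), (-(R ∘ₗ Sstar) : Module.End K VB) ^ l)) ∘ₗ R)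
      = ((1 - M : Module.End K VA) : VA →ₗ[K] VA) := rfl
  rw [hΦ]
  ext x
  simp only [LinearMap.mem_ker, Submodule.mem_map, LinearMap.add_apply]
  constructor
  · intro hx
    refine ⟨Q x, ?_, ?_⟩
    · have hfix : (1 - M) (Q x) = x := by
        have := LinearMap.congr_fun hMQ x
        simpa [Module.End.mul_apply] using this
      have := hkey (Q x)
      rw [hfix, hx] at this
      exact this.symm
    · have := LinearMap.congr_fun hMQ x
      simpa [Module.End.mul_apply] using this
  · rintro ⟨z, hz, rfl⟩
    rw [hkey z, hz]
end

section
/- Under the hypotheses of the block-triangular kernel theorem, the restriction of I_A − S∘R to ker T_* is injective; consequently, if the spaces are finite-dimensional, dim ker T = dim ker T_*. -/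
/-- kernels of powers are monotone -/
lemma aux_ker_pow_mono {K V : Type*} [Field K] [AddCommGroup V] [Module K V]
    (f : Module.End K V) {a b : ℕ} (h : a ≤ b) :
    LinearMap.ker (f ^ a) ≤ LinearMap.ker (f ^ b) := by
  intro x hx
  simp only [LinearMap.mem_ker] at hx ⊢
  have : f ^ b = f ^ (b - a) * f ^ a := by rw [← pow_add]; congr 1; omega
  rw [this, Module.End.mul_apply, hx, map_zero]

lemma aux_comp_pow {K VA VB : Type*} [Field K]
    [AddCommGroup VA] [Module K VA] [AddCommGroup VB] [Module K VB]
    (F : VB →ₗ[K] VA) (G : VA →ₗ[K] VB) :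
    ∀ n : ℕ, ((F ∘ₗ G : Module.End K VA)) ^ (n + 1)
      = F ∘ₗ (((G ∘ₗ F : Module.End K VB)) ^ n) ∘ₗ G := by
  intro n
  induction n with
  | zero => ext x; simp
  | succ n ih =>
      rw [pow_succ, ih, pow_succ, Module.End.mul_eq_comp, Module.End.mul_eq_comp]
      ext x
      simp [LinearMap.comp_apply]

/-- `I_A − S∘R` is injective on `ker T_*`; consequently, in finite dimension,
`dim ker T = dim ker T_*`. -/
theorem stmt_5 {K VA VB : Type*} [Field K]
    [AddCommGroup VA] [Module K VA] [AddCommGroup VB] [Module K VB]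
    (s : ℕ) (hs : 0 < s)
    (A : ℕ → Submodule K VA) (B : ℕ → Submodule K VB)
    (hA : DirectSum.IsInternal A) (hAtop : ∀ n, s < n → A n = ⊥)
    (hB : DirectSum.IsInternal B) (hBtop : ∀ n, s < n → B n = ⊥)
    (Tstar R : VA →ₗ[K] VB)
    (hT1 : ∀ n, ∀ x ∈ A n, Tstar x ∈ B n)
    (hT2 : Function.Surjective Tstar)
    (hR1 : ∀ n < s, ∀ x ∈ A n, R x ∈ ⨆ l ∈ Set.Icc (n + 1) s, B l)
    (hR2 : ∀ x ∈ A s, R x = 0)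
    (Sstar : VB →ₗ[K] VA)
    (hS1 : Tstar ∘ₗ Sstar = LinearMap.id)
    (hS2 : ∀ n ≤ s, ∀ y ∈ B n, Sstar y ∈ A n)
    [FiniteDimensional K VA] [FiniteDimensional K VB] :
    Set.InjOn
        ⇑((LinearMap.id : VA →ₗ[K] VA) -
          (Sstar ∘ₗ (∑ l ∈ Finset.range (s + 1), (-(R ∘ₗ Sstar) : Module.End K VB) ^ l)) ∘ₗ R)
        (LinearMap.ker Tstar) ∧
      Module.finrank K (LinearMap.ker (Tstar + R)) =
        Module.finrank K (LinearMap.ker Tstar) := by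
  set N : Module.End K VB := R ∘ₗ Sstar with hN
  -- grading implies nilpotency of N
  have hBn : ∀ m n, n + m = s → B n ≤ LinearMap.ker (N ^ (m + 1)) := by
    intro m
    induction m using Nat.strong_induction_on with
    | _ m ih =>
      intro n hnm y hy
      rcases Nat.eq_zero_or_pos m with hm | hm
      · subst hm
        have hn : n = s := by omega
        simp only [LinearMap.mem_ker, pow_one, hN, LinearMap.comp_apply]
        have h1 := hS2 n hn.le y hy
        rw [hn] at h1
        exact hR2 _ h1
      · have hns : n < s := by omega
        have h1 : Sstar y ∈ A n := hS2 n (by omega) y hy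
        have h2 : R (Sstar y) ∈ ⨆ l ∈ Set.Icc (n + 1) s, B l := hR1 n hns _ h1
        have h3 : (⨆ l ∈ Set.Icc (n + 1) s, B l) ≤ LinearMap.ker (N ^ m) := by
          refine iSup_le fun l => iSup_le fun hl => ?_
          obtain ⟨hl1, hl2⟩ := hl
          exact (ih (s - l) (by omega) l (by omega)).trans
            (aux_ker_pow_mono N (by omega))
        have h4 : (N ^ m) (N y) = 0 := h3 h2
        simp only [LinearMap.mem_ker, pow_succ, Module.End.mul_apply]
        exact h4
  have hNnil : N ^ (s + 1) = 0 := by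
    have htop : (⊤ : Submodule K VB) ≤ LinearMap.ker (N ^ (s + 1)) := by
      rw [← hB.submodule_iSup_eq_top]
      refine iSup_le fun n => ?_
      rcases le_or_gt n s with h | h
      · exact (hBn (s - n) n (by omega)).trans (aux_ker_pow_mono N (by omega))
      · rw [hBtop n h]; exact bot_le
    ext x
    simpa using htop (Submodule.mem_top (x := x))
  set Q : Module.End K VB := ∑ l ∈ Finset.range (s + 1), (-N) ^ l with hQ
  have hComm : Commute N Q := Commute.sum_right _ _ _ fun l _ =>
    ((Commute.refl N).neg_right).pow_right l
  have hNQ : (1 + N) * Q = 1 := by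
    have h := mul_geom_sum (-N) (s + 1)
    rw [neg_pow, hNnil] at h
    have h2 : (-N - 1) * Q = -1 := by simpa [hQ] using h
    have h3 : (-N - 1 : Module.End K VB) = -(1 + N) := by abel
    rw [h3, neg_mul, neg_eq_iff_eq_neg, neg_neg] at h2
    exact h2
  have hNQnil : (N * Q) ^ (s + 1) = 0 := by
    rw [hComm.mul_pow, hNnil, zero_mul]
  set P : Module.End K VA := (Sstar ∘ₗ Q) ∘ₗ R with hP
  have hRF : R ∘ₗ (Sstar ∘ₗ Q) = N * Q := by
    rw [Module.End.mul_eq_comp, hN, LinearMap.comp_assoc]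
  have hPnil : P ^ (s + 2) = 0 := by
    have := aux_comp_pow (Sstar ∘ₗ Q) R (s + 1)
    rw [hRF, hNQnil] at this
    rw [hP]
    rw [show s + 2 = (s + 1) + 1 from rfl, this]
    ext x; simp
  set Ψ : Module.End K VA := ∑ l ∈ Finset.range (s + 2), P ^ l with hΨ
  have hΨΦ : Ψ * (1 - P) = 1 := by
    have h := geom_sum_mul P (s + 2)
    rw [hPnil] at h
    have h2 : Ψ * (P - 1) = -1 := by simpa [hΨ] using h
    have h3 : Ψ * (1 - P) = -(Ψ * (P - 1)) := by rw [← mul_neg, neg_sub]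
    rw [h3, h2, neg_neg]
  have hΦΨ : (1 - P) * Ψ = 1 := by
    have h := mul_geom_sum P (s + 2)
    rw [hPnil] at h
    have h2 : (P - 1) * Ψ = -1 := by simpa [hΨ] using h
    have h3 : (1 - P) * Ψ = -((P - 1) * Ψ) := by rw [← neg_mul, neg_sub]
    rw [h3, h2, neg_neg]
  -- the map in the statement is 1 - P
  have hmap : ((LinearMap.id : VA →ₗ[K] VA) -
      (Sstar ∘ₗ (∑ l ∈ Finset.range (s + 1), (-(R ∘ₗ Sstar) : Module.End K VB) ^ l)) ∘ₗ R)
      = (1 - P : Module.End K VA) := rfl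
  have hΦΨx : ∀ x : VA, (1 - P : Module.End K VA) (Ψ x) = x := by
    intro x
    have := congrArg (fun f : Module.End K VA => f x) hΦΨ
    simpa [Module.End.mul_apply] using this
  have hΨΦx : ∀ x : VA, Ψ ((1 - P : Module.End K VA) x) = x := by
    intro x
    have := congrArg (fun f : Module.End K VA => f x) hΨΦ
    simpa [Module.End.mul_apply] using this
  have hinj : Function.Injective ⇑(1 - P : Module.End K VA) := by
    intro x y hxy
    have h1 : Ψ ((1 - P : Module.End K VA) x) = Ψ ((1 - P : Module.End K VA) y) := congrArg Ψ hxy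
    rwa [hΨΦx, hΨΦx] at h1
  -- T ∘ (1 - P) = Tstar
  have hTS : (Tstar + R) ∘ₗ Sstar = (1 + N : Module.End K VB) := by
    rw [LinearMap.add_comp, hS1, hN]
    rfl
  have hTP : (Tstar + R) ∘ₗ P = R := by
    rw [hP, ← LinearMap.comp_assoc, ← LinearMap.comp_assoc, hTS]
    have : ((1 + N : Module.End K VB) ∘ₗ Q) = (1 : Module.End K VB) := by
      rw [← Module.End.mul_eq_comp, hNQ]
    rw [this]
    ext x; simp
  have hTΦ : (Tstar + R) ∘ₗ (1 - P : Module.End K VA) = Tstar := by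
    rw [LinearMap.comp_sub, hTP]
    ext x; simp
  -- build equivalence
  let e : VA ≃ₗ[K] VA := LinearEquiv.ofLinear (1 - P) Ψ
    (by rw [← Module.End.mul_eq_comp, hΦΨ]; rfl)
    (by rw [← Module.End.mul_eq_comp, hΨΦ]; rfl)
  have hker : LinearMap.ker (Tstar + R)
      = Submodule.map ((1 - P : Module.End K VA)) (LinearMap.ker Tstar) := by
    ext x
    constructor
    · intro hx
      refine ⟨Ψ x, ?_, hΦΨx x⟩
      have h1 : Tstar (Ψ x) = ((Tstar + R) ∘ₗ (1 - P : Module.End K VA)) (Ψ x) := by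
        rw [hTΦ]
      rw [LinearMap.comp_apply, hΦΨx x] at h1
      rw [LinearMap.mem_ker] at hx
      simp only [SetLike.mem_coe, LinearMap.mem_ker]
      rw [h1, hx]
    · rintro ⟨y, hy, rfl⟩
      have : (Tstar + R) ((1 - P : Module.End K VA) y)
          = ((Tstar + R) ∘ₗ (1 - P : Module.End K VA)) y := rfl
      rw [LinearMap.mem_ker, this, hTΦ]
      exact hy
  constructor
  · rw [hmap]
    exact hinj.injOn
  · rw [hker]
    have hcoe : (e : VA →ₗ[K] VA) = (1 - P : Module.End K VA) := rfl
    rw [← hcoe]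
    exact LinearEquiv.finrank_map_eq e _
end

section
/- Let P be a nonzero homogeneous polynomial of degree γ in d variables over ℂ, and let L_* = P(∂) be the associated constant-coefficient homogeneous differential operator of order γ. Then for every n ∈ ℕ_0, the linear map L_* : P̃_{n+γ} → P̃_n between spaces of homogeneous polynomials of degrees n+γ and n is surjective. -/
open MvPolynomial

/-- The iterated partial derivative operator `∂^i = ∂_{x_1}^{i_1} ⋯ ∂_{x_d}^{i_d}`
on multivariate polynomials. -/
noncomputable def partialD {R : Type*} [CommSemiring R] {d : ℕ} (i : Fin d →₀ ℕ) :
    Module.End R (MvPolynomial (Fin d) R) :=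
  (List.ofFn fun g : Fin d =>
    ((pderiv g : Derivation R _ _).toLinearMap : Module.End R (MvPolynomial (Fin d) R)) ^ i g).prod

/-- `P(∂)Q`: the differential operator associated to `P` applied to `Q`. -/
noncomputable def applyDiff {d : ℕ} (P Q : MvPolynomial (Fin d) ℂ) : MvPolynomial (Fin d) ℂ :=
  ∑ i ∈ P.support, P.coeff i • partialD i Q

/-- Coefficient-wise complex conjugation of a polynomial. -/
noncomputable def conjP {d : ℕ} (Q : MvPolynomial (Fin d) ℂ) : MvPolynomial (Fin d) ℂ :=
  Q.map (starRingEnd ℂ)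

/-- The pairing `⟨P,Q⟩ := (P(∂)Q̄)(0)`. -/
noncomputable def qpair {d : ℕ} (P Q : MvPolynomial (Fin d) ℂ) : ℂ :=
  MvPolynomial.eval 0 (applyDiff P (conjP Q))

/-!
The partial derivatives commute, so `P ↦ P(∂)` is an algebra homomorphism into the endomorphisms
of the polynomial ring, and it commutes with conjugating coefficients. The pairing
`⟨A, A⟩ = (A(∂) Ā)(0) = ∑ᵢ |aᵢ|² i!` is positive definite, and for `A = x P̄` it equals
`(x(∂) conj(P(∂)(P̄ x)))(0)`. Hence `x ↦ P(∂)(P̄ x)` is injective, so bijective, on the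
finite-dimensional space `P̃ₙ`, and the preimages `P̄ x` lie in `P̃ₙ₊ᵧ`.
-/

open scoped IsMulCommutative

section DiffOp

variable {R σ : Type*} [CommSemiring R]

theorem MvPolynomial.pderiv_pderiv_comm (a b : σ) (p : MvPolynomial σ R) :
    pderiv a (pderiv b p) = pderiv b (pderiv a p) := by
  classical
  induction p using MvPolynomial.induction_on' with
  | monomial s c =>
    rcases eq_or_ne a b with rfl | hab
    · rfl
    · simp only [pderiv_monomial, tsub_tsub, add_comm (Finsupp.single b 1), Finsupp.tsub_apply,
        Finsupp.single_eq_of_ne hab, Finsupp.single_eq_of_ne hab.symm, tsub_zero]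
      ring_nf
  | add p q hp hq => simp only [map_add, hp, hq]

variable (R σ) in
noncomputable def pderivEnd (g : σ) : Module.End R (MvPolynomial σ R) :=
  (pderiv g : Derivation R _ _).toLinearMap

instance : IsMulCommutative (Algebra.adjoin R (Set.range (pderivEnd R σ))) :=
  Algebra.isMulCommutative_adjoin R <| by
    rintro _ ⟨a, rfl⟩ _ ⟨b, rfl⟩
    exact LinearMap.ext fun p => pderiv_pderiv_comm a b p

variable (R σ) in
/-- `P ↦ P(∂)`. Since `aeval` needs a commutative target, the `∂_g` are evaluated in the
commutative subalgebra they generate. -/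
noncomputable def diffOp : MvPolynomial σ R →ₐ[R] Module.End R (MvPolynomial σ R) :=
  (Algebra.adjoin R (Set.range (pderivEnd R σ))).val.comp
    (aeval fun g => ⟨pderivEnd R σ g, Algebra.subset_adjoin ⟨g, rfl⟩⟩)

theorem diffOp_X_pow (g : σ) (k : ℕ) : diffOp R σ (X g ^ k) = pderivEnd R σ g ^ k := by
  simp [diffOp]

theorem diffOp_monomial_one {d : ℕ} (i : Fin d →₀ ℕ) :
    diffOp R (Fin d) (monomial i 1) = partialD i := by
  simp only [diffOp, AlgHom.comp_apply, aeval_monomial, map_one, one_mul,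
    Finsupp.prod_fintype _ _ fun _ => pow_zero _]
  rw [← List.prod_ofFn, map_list_prod, List.map_ofFn]
  rfl

end DiffOp

section PartialD

variable {R : Type*} [CommSemiring R]

theorem pderivEnd_pow_monomial {σ : Type*} [DecidableEq σ] (g : σ) (k : ℕ) (j : σ →₀ ℕ) (c : R) :
    (pderivEnd R σ g ^ k) (monomial j c)
      = monomial (j - Finsupp.single g k) (c * (j g).descFactorial k) := by
  induction k with
  | zero => simp
  | succ k ih =>
    rw [pow_succ', Module.End.mul_apply, ih, pderivEnd, Derivation.coeFn_coe, pderiv_monomial,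
      tsub_tsub, ← Finsupp.single_add, Finsupp.tsub_apply, Finsupp.single_eq_same,
      Nat.descFactorial_succ, Nat.cast_mul, mul_assoc, mul_comm ((j g - k : ℕ) : R)]

variable {d : ℕ}

theorem partialD_monomial (i j : Fin d →₀ ℕ) (c : R) :
    partialD i (monomial j c) = monomial (j - i) (c * ∏ g, ((j g).descFactorial (i g) : R)) := by
  induction i using Finsupp.induction generalizing j c with
  | zero => rw [← diffOp_monomial_one]; simp
  | single_add g k rest hg _ ih =>
    have hrest : rest g = 0 := Finsupp.notMem_support_iff.mp hg
    have hsplit : ∀ h, (j h).descFactorial ((Finsupp.single g k + rest) h)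
        = (j h).descFactorial (rest h) * ((j - rest) h).descFactorial (Finsupp.single g k h) := by
      intro h
      rcases eq_or_ne h g with rfl | hh
      · simp [hrest]
      · simp [Finsupp.single_eq_of_ne hh]
    have hsingle : ∏ h, (((j - rest) h).descFactorial (Finsupp.single g k h) : R)
        = ((j - rest) g).descFactorial k :=
      (Finset.prod_eq_single g (fun h _ hh => by simp [Finsupp.single_eq_of_ne hh]) (by simp)).trans
        (by simp)
    rw [← diffOp_monomial_one, monomial_single_add, map_mul, diffOp_monomial_one, diffOp_X_pow,
      Module.End.mul_apply, ih, pderivEnd_pow_monomial, tsub_tsub, add_comm rest]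
    simp only [hsplit, Nat.cast_mul, Finset.prod_mul_distrib, hsingle, mul_assoc]

theorem prod_descFactorial_eq_zero_of_not_le {i j : Fin d →₀ ℕ} (h : ¬i ≤ j) :
    ∏ g, ((j g).descFactorial (i g) : R) = 0 := by
  obtain ⟨g, hg⟩ : ∃ g, j g < i g := by simpa [Finsupp.le_def] using h
  exact Finset.prod_eq_zero (Finset.mem_univ g) (by simp [Nat.descFactorial_eq_zero_iff_lt.mpr hg])

theorem MvPolynomial.IsHomogeneous.partialD {Q : MvPolynomial (Fin d) R} {n : ℕ}
    (i : Fin d →₀ ℕ) (hQ : Q.IsHomogeneous (n + i.degree)) : (partialD i Q).IsHomogeneous n := by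
  rw [Q.as_sum, map_sum]
  refine IsHomogeneous.sum _ _ _ fun j hj => ?_
  rw [partialD_monomial]
  by_cases hij : i ≤ j
  · refine isHomogeneous_monomial _ ?_
    have hj : j.degree = n + i.degree := by
      by_contra h
      exact mem_support_iff.mp hj (hQ.coeff_eq_zero h)
    rw [← tsub_add_cancel_of_le hij, map_add] at hj
    omega
  · rw [prod_descFactorial_eq_zero_of_not_le hij, mul_zero, monomial_zero]
    exact isHomogeneous_zero _ _ _

theorem constantCoeff_partialD_monomial (i j : Fin d →₀ ℕ) (c : R) :
    constantCoeff (partialD i (monomial j c))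
      = if j = i then c * ∏ g, ((i g).factorial : R) else 0 := by
  rw [partialD_monomial, constantCoeff_monomial]
  by_cases hij : i ≤ j
  · rcases eq_or_ne j i with rfl | hne
    · simp [Nat.descFactorial_self]
    · rw [if_neg hne, if_neg (fun h => hne (le_antisymm (tsub_eq_zero_iff_le.mp h) hij))]
  · rw [prod_descFactorial_eq_zero_of_not_le hij, mul_zero, ite_self,
      if_neg (show j ≠ i by rintro rfl; exact hij le_rfl)]

theorem map_partialD {S : Type*} [CommSemiring S] (φ : R →+* S) (i : Fin d →₀ ℕ)
    (Q : MvPolynomial (Fin d) R) : map φ (partialD i Q) = partialD i (map φ Q) := by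
  induction Q using MvPolynomial.induction_on' with
  | monomial j c => simp [partialD_monomial]
  | add p q hp hq => simp only [map_add, hp, hq]

end PartialD

section Complex

variable {d : ℕ}

theorem applyDiff_eq_diffOp (P Q : MvPolynomial (Fin d) ℂ) :
    applyDiff P Q = diffOp ℂ (Fin d) P Q := by
  conv_rhs => rw [P.as_sum]
  simp only [applyDiff, map_sum, LinearMap.sum_apply]
  refine Finset.sum_congr rfl fun i _ => ?_
  rw [← diffOp_monomial_one, ← LinearMap.smul_apply, ← map_smul, smul_monomial, smul_eq_mul,
    mul_one]

theorem applyDiff_mul (P Q R : MvPolynomial (Fin d) ℂ) :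
    applyDiff (P * Q) R = applyDiff P (applyDiff Q R) := by
  simp only [applyDiff_eq_diffOp, map_mul, Module.End.mul_apply]

theorem MvPolynomial.IsHomogeneous.applyDiff {P Q : MvPolynomial (Fin d) ℂ} {γ n : ℕ}
    (hP : P.IsHomogeneous γ) (hQ : Q.IsHomogeneous (n + γ)) :
    (applyDiff P Q).IsHomogeneous n := by
  refine IsHomogeneous.sum _ _ _ fun i hi => (homogeneousSubmodule _ ℂ n).smul_mem _ ?_
  have hi : i.degree = γ := by
    by_contra h
    exact mem_support_iff.mp hi (hP.coeff_eq_zero h)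
  exact (hi ▸ hQ).partialD i

theorem support_conjP (Q : MvPolynomial (Fin d) ℂ) : (conjP Q).support = Q.support :=
  support_map_of_injective _ (starRingEnd ℂ).injective

theorem conjP_ne_zero {P : MvPolynomial (Fin d) ℂ} (hP : P ≠ 0) : conjP P ≠ 0 :=
  (map_ne_zero_iff _ (map_injective _ (starRingEnd ℂ).injective)).mpr hP

theorem conjP_applyDiff (P Q : MvPolynomial (Fin d) ℂ) :
    conjP (applyDiff P Q) = applyDiff (conjP P) (conjP Q) := by
  simp only [applyDiff, support_conjP]
  simp only [conjP, map_sum, coeff_map, smul_eq_C_mul, map_mul, map_C, map_partialD]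

theorem MvPolynomial.IsHomogeneous.conjP_mul {P x : MvPolynomial (Fin d) ℂ} {γ n : ℕ}
    (hP : P.IsHomogeneous γ) (hx : x.IsHomogeneous n) : (conjP P * x).IsHomogeneous (n + γ) := by
  rw [add_comm]
  exact (hP.map _).mul hx

theorem qpair_self (Q : MvPolynomial (Fin d) ℂ) :
    qpair Q Q
      = ((∑ i ∈ Q.support, Complex.normSq (Q.coeff i) * ∏ g, ((i g).factorial : ℝ) : ℝ) : ℂ) := by
  have hconj : conjP Q = ∑ j ∈ Q.support, monomial j (starRingEnd ℂ (Q.coeff j)) := by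
    conv_lhs => rw [(conjP Q).as_sum]
    rw [support_conjP]
    simp [conjP, coeff_map]
  simp only [qpair, applyDiff, hconj, eval_zero, map_sum, smul_eq_C_mul, map_mul, constantCoeff_C,
    constantCoeff_partialD_monomial, mul_ite, mul_zero, Finset.sum_ite_eq']
  push_cast
  refine Finset.sum_congr rfl fun i hi => ?_
  rw [if_pos hi, ← mul_assoc, Complex.mul_conj]

theorem eq_zero_of_qpair_self_eq_zero {Q : MvPolynomial (Fin d) ℂ} (h : qpair Q Q = 0) : Q = 0 := by
  rw [qpair_self, Complex.ofReal_eq_zero, Finset.sum_eq_zero_iff_of_nonneg fun i _ =>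
    mul_nonneg (Complex.normSq_nonneg _) (by positivity)] at h
  ext i
  by_contra hi
  have hfac : 0 < ∏ g, ((i g).factorial : ℝ) := Finset.prod_pos fun g _ => by positivity
  exact hi (Complex.normSq_eq_zero.mp
    ((mul_eq_zero.mp (h i (mem_support_iff.mpr hi))).resolve_right hfac.ne'))

theorem eq_zero_of_applyDiff_conjP_mul_eq_zero {P x : MvPolynomial (Fin d) ℂ} (hP : P ≠ 0)
    (h : applyDiff P (conjP P * x) = 0) : x = 0 := by
  have hconj : applyDiff (conjP P) (conjP (x * conjP P)) = 0 := by
    rw [mul_comm, ← conjP_applyDiff, h]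
    exact map_zero _
  have hself : qpair (x * conjP P) (x * conjP P) = 0 := by
    rw [qpair, applyDiff_mul, hconj, applyDiff_eq_diffOp, map_zero, map_zero]
  exact (mul_eq_zero.mp (eq_zero_of_qpair_self_eq_zero hself)).resolve_right (conjP_ne_zero hP)

theorem exists_applyDiff_conjP_mul_eq {P : MvPolynomial (Fin d) ℂ} {γ : ℕ} (hP : P ≠ 0)
    (hhom : P.IsHomogeneous γ) (n : ℕ) {Λ : MvPolynomial (Fin d) ℂ} (hΛ : Λ.IsHomogeneous n) :
    ∃ x : MvPolynomial (Fin d) ℂ, x.IsHomogeneous n ∧ applyDiff P (conjP P * x) = Λ := by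
  have : Module.Finite ℂ (homogeneousSubmodule (Fin d) ℂ n) :=
    Module.Finite.iff_fg.mpr (homogeneousSubmodule_fg (Fin d) ℂ n)
  let F := diffOp ℂ (Fin d) P ∘ₗ LinearMap.mulLeft ℂ (conjP P)
  have hF : ∀ x, F x = applyDiff P (conjP P * x) := fun x => (applyDiff_eq_diffOp _ _).symm
  have hmaps : ∀ x ∈ homogeneousSubmodule (Fin d) ℂ n, F x ∈ homogeneousSubmodule (Fin d) ℂ n :=
    fun x hx => hF x ▸ hhom.applyDiff (hhom.conjP_mul hx)
  have hinj : Function.Injective (F.restrict hmaps) := by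
    refine (injective_iff_map_eq_zero _).mpr fun x hx => Subtype.ext ?_
    have hx' := congrArg Subtype.val hx
    rw [LinearMap.coe_restrict_apply, hF] at hx'
    exact eq_zero_of_applyDiff_conjP_mul_eq_zero hP hx'
  obtain ⟨x, hx⟩ := LinearMap.injective_iff_surjective.mp hinj ⟨Λ, hΛ⟩
  have hx' := congrArg Subtype.val hx
  rw [LinearMap.coe_restrict_apply, hF] at hx'
  exact ⟨x, x.2, hx'⟩

end Complex

/-- For any nonzero homogeneous polynomial `P` of degree `γ`, the constant-coefficient
homogeneous differential operator `L_* = P(∂)` maps the homogeneous polynomials of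
degree `n+γ` onto those of degree `n`, for every `n`. -/
theorem stmt_11 (d γ : ℕ) (P : MvPolynomial (Fin d) ℂ) (hP : P ≠ 0)
    (hhom : P.IsHomogeneous γ) (n : ℕ) :
    ∀ Λ : MvPolynomial (Fin d) ℂ, Λ.IsHomogeneous n →
      ∃ Pi : MvPolynomial (Fin d) ℂ, Pi.IsHomogeneous (n + γ) ∧ applyDiff P Pi = Λ := by
  intro Λ hΛ
  obtain ⟨x, hx, rfl⟩ := exists_applyDiff_conjP_mul_eq hP hhom n hΛ
  exact ⟨conjP P * x, hhom.conjP_mul hx, rfl⟩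
end

section
/- Let L be a linear partial differential operator of order γ with coefficients of class C^{p−γ} near x_0, where p ≥ γ. If u is a C^{p+γ} function with L u = 0 in a neighborhood of x_0, then the degree-p Taylor polynomial T_p u of u at x_0 satisfies the quasi-Trefftz property T_{p−γ}[L(T_p u)] = 0, i.e. T_p u belongs to the quasi-Trefftz space QT_p = {Π ∈ P_p : T_{p−γ}[LΠ] = 0}. -/
open MvPolynomial

/-- Partial derivative of a function of `d` real variables in the `g`-th direction. -/
noncomputable def pdFun {d : ℕ} (g : Fin d) (f : (Fin d → ℝ) → ℝ) : (Fin d → ℝ) → ℝ :=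
  fun x => fderiv ℝ f x (Pi.single g 1)

/-- Iterated partial derivative `∂^i = ∂_{x_1}^{i_1} ⋯ ∂_{x_d}^{i_d}` of a function. -/
noncomputable def pdMulti {d : ℕ} (i : Fin d →₀ ℕ) (f : (Fin d → ℝ) → ℝ) : (Fin d → ℝ) → ℝ :=
  ((List.ofFn fun g : Fin d => (pdFun g)^[i g]).foldr (· ∘ ·) id) f

/-- The finset of multi-indices of length `d` and total degree at most `k`. -/
noncomputable def degLE (d k : ℕ) : Finset (Fin d →₀ ℕ) :=
  (Finset.Iic (Finsupp.equivFunOnFinite.symm fun _ : Fin d => k)).filter fun j => (∑ g, j g) ≤ k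

/-- The differential operator `L = ∑_{|j| ≤ γ} c_j(x) ∂^j` applied to `f`. -/
noncomputable def applyL {d : ℕ} (γ : ℕ) (c : (Fin d →₀ ℕ) → (Fin d → ℝ) → ℝ)
    (f : (Fin d → ℝ) → ℝ) : (Fin d → ℝ) → ℝ :=
  fun x => ∑ j ∈ degLE d γ, c j x * pdMulti j f x

/-- The order-`k` Taylor polynomial of `f` at `x0`, as a function:
`∑_{|i| ≤ k} (1/i!) ∂^i f(x0) (x − x0)^i`. -/
noncomputable def taylorFun {d : ℕ} (x0 : Fin d → ℝ) (k : ℕ) (f : (Fin d → ℝ) → ℝ) :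
    (Fin d → ℝ) → ℝ :=
  fun x => ∑ i ∈ degLE d k,
    (pdMulti i f x0 / ∏ g, ((i g).factorial : ℝ)) * ∏ g, (x g - x0 g) ^ i g

/-!
Write `T = T_p u` and `n = p - γ`. Since `∂^i (X - x0)^j` vanishes at `x0` unless `i = j`, where it
equals `i!`, the polynomial `T` has the same partial derivatives as `u` at `x0` up to order `p`.
Each term `c_j ∂^j` of `L` lowers that order by `|j| ≤ γ`, and by the Leibniz rule multiplying by a
`C^n` coefficient preserves agreement of derivatives up to order `n`; so `L T` and `L u` have the
same derivatives up to order `n` at `x0`. As `L u` vanishes near `x0`, every derivative of `L T` of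
order at most `n` vanishes at `x0`, which is `T_n[L T] = 0`.
-/

open Filter Topology

noncomputable def pdList {d : ℕ} (s : List (Fin d)) (f : (Fin d → ℝ) → ℝ) : (Fin d → ℝ) → ℝ :=
  s.foldr pdFun f

-- Directions in every order, not only the sorted ones of `pdMulti`, so that the Leibniz rule can
-- peel off one derivative at a time.
def SameJet {d : ℕ} (x0 : Fin d → ℝ) (n : ℕ) (f f' : (Fin d → ℝ) → ℝ) : Prop :=
  ∀ s : List (Fin d), s.length ≤ n → pdList s f x0 = pdList s f' x0

section PartialDeriv
variable {d : ℕ} {f f' a b : (Fin d → ℝ) → ℝ} {x : Fin d → ℝ}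

lemma pdFun_congr (g : Fin d) (h : f =ᶠ[𝓝 x] f') : pdFun g f =ᶠ[𝓝 x] pdFun g f' :=
  (h.fderiv (𝕜 := ℝ)).mono fun y hy => by simp only [pdFun, hy]

lemma ContDiffAt.pdFun {n : ℕ} (g : Fin d) (h : ContDiffAt ℝ (n + 1 : ℕ) f x) :
    ContDiffAt ℝ n (pdFun g f) x :=
  (h.fderiv_right (by norm_cast)).clm_apply contDiffAt_const

lemma ContDiffAt.eventually_differentiableAt (h : ContDiffAt ℝ 1 f x) :
    ∀ᶠ y in 𝓝 x, DifferentiableAt ℝ f y :=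
  (h.eventually (by simp)).mono fun _ hy => hy.differentiableAt one_ne_zero

lemma pdFun_sum {ι : Type*} (g : Fin d) (t : Finset ι) {F : ι → (Fin d → ℝ) → ℝ}
    (hF : ∀ r ∈ t, ContDiffAt ℝ 1 (F r) x) :
    pdFun g (∑ r ∈ t, F r) =ᶠ[𝓝 x] ∑ r ∈ t, pdFun g (F r) := by
  have hdiff : ∀ᶠ y in 𝓝 x, ∀ r ∈ t, DifferentiableAt ℝ (F r) y :=
    (eventually_all_finset t).2 fun r hr => (hF r hr).eventually_differentiableAt
  filter_upwards [hdiff] with y hy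
  simp [pdFun, fderiv_sum hy, Finset.sum_apply]

lemma pdFun_mul (g : Fin d) (ha : ContDiffAt ℝ 1 a x) (hb : ContDiffAt ℝ 1 b x) :
    pdFun g (a * b) =ᶠ[𝓝 x] pdFun g a * b + a * pdFun g b := by
  filter_upwards [ha.eventually_differentiableAt, hb.eventually_differentiableAt] with y hay hby
  simp [pdFun, fderiv_mul hay hby]
  ring

lemma pdFun_const_smul (g : Fin d) (r : ℝ) : pdFun g (r • f) = r • pdFun g f := by
  ext y
  simp [pdFun, fderiv_const_smul_field]

lemma pdFun_zero (g : Fin d) : pdFun g (0 : (Fin d → ℝ) → ℝ) = 0 := by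
  ext y
  simp [pdFun]

lemma pdFun_comm (g g' : Fin d) (h : ContDiffAt ℝ 2 f x) :
    pdFun g (pdFun g' f) x = pdFun g' (pdFun g f) x := by
  have hdiff : DifferentiableAt ℝ (fderiv ℝ f) x :=
    (h.fderiv_right (m := 1) le_rfl).differentiableAt one_ne_zero
  unfold pdFun
  simp only [fderiv_clm_apply hdiff (differentiableAt_const _)]
  simpa using h.isSymmSndFDerivAt (by simp) (Pi.single g 1) (Pi.single g' 1)

end PartialDeriv

section IteratedPartialDeriv
variable {d : ℕ} {f f' a b : (Fin d → ℝ) → ℝ} {x : Fin d → ℝ}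

lemma pdList_cons (g : Fin d) (s : List (Fin d)) : pdList (g :: s) f = pdFun g (pdList s f) :=
  rfl

lemma pdList_append (s t : List (Fin d)) : pdList (s ++ t) f = pdList s (pdList t f) :=
  List.foldr_append ..

lemma pdList_congr (s : List (Fin d)) (h : f =ᶠ[𝓝 x] f') : pdList s f =ᶠ[𝓝 x] pdList s f' := by
  induction s with
  | nil => exact h
  | cons g s ih => exact pdFun_congr g ih

lemma ContDiffAt.pdList {n : ℕ} (s : List (Fin d)) (h : ContDiffAt ℝ (n + s.length : ℕ) f x) :
    ContDiffAt ℝ n (pdList s f) x := by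
  induction s generalizing n with
  | nil => exact h
  | cons g s ih => exact (ih (by simpa [add_assoc, add_comm 1] using h)).pdFun g

lemma pdList_sum {ι : Type*} (s : List (Fin d)) (t : Finset ι) {F : ι → (Fin d → ℝ) → ℝ}
    (hF : ∀ r ∈ t, ContDiffAt ℝ s.length (F r) x) :
    pdList s (∑ r ∈ t, F r) =ᶠ[𝓝 x] ∑ r ∈ t, pdList s (F r) := by
  induction s with
  | nil => rfl
  | cons g s ih =>
    refine (pdFun_congr g (ih fun r hr => (hF r hr).of_le (by simp))).trans ?_
    exact pdFun_sum g t fun r hr =>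
      ContDiffAt.pdList (n := 1) s (by simpa [add_comm] using hF r hr)

lemma pdList_add (s : List (Fin d)) (ha : ContDiffAt ℝ s.length a x)
    (hb : ContDiffAt ℝ s.length b x) : pdList s (a + b) =ᶠ[𝓝 x] pdList s a + pdList s b := by
  simpa [Fin.sum_univ_two] using pdList_sum s Finset.univ (F := ![a, b]) (by simp [ha, hb])

lemma pdList_const_smul (s : List (Fin d)) (r : ℝ) : pdList s (r • f) = r • pdList s f := by
  induction s with
  | nil => rfl
  | cons g s ih => rw [pdList_cons, pdList_cons, ih, pdFun_const_smul]

lemma pdList_zero (s : List (Fin d)) : pdList s (0 : (Fin d → ℝ) → ℝ) = 0 := by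
  induction s with
  | nil => rfl
  | cons g s ih => rw [pdList_cons, ih, pdFun_zero]

lemma pdList_perm {s s' : List (Fin d)} (hs : s.Perm s') (h : ContDiffAt ℝ s.length f x) :
    pdList s f =ᶠ[𝓝 x] pdList s' f := by
  induction hs with
  | nil => rfl
  | cons g _ ih => exact pdFun_congr g (ih (h.of_le (by simp)))
  | swap g g' s =>
    have h2 : ContDiffAt ℝ 2 (pdList s f) x :=
      ContDiffAt.pdList s (h.of_le (Nat.cast_le.2 (by simp; omega)))
    filter_upwards [h2.eventually (by simp)] with y hy
    exact pdFun_comm g' g hy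
  | trans h₁₂ _ ih₁₂ ih₂₃ => exact (ih₁₂ h).trans (ih₂₃ (h₁₂.length_eq ▸ h))

end IteratedPartialDeriv

namespace SameJet
variable {d : ℕ} {x0 : Fin d → ℝ} {m n : ℕ} {f f' f'' a b b' : (Fin d → ℝ) → ℝ}

lemma mono (h : SameJet x0 n f f') (hmn : m ≤ n) : SameJet x0 m f f' :=
  fun s hs => h s (hs.trans hmn)

lemma trans (h : SameJet x0 n f f') (h' : SameJet x0 n f' f'') : SameJet x0 n f f'' :=
  fun s hs => (h s hs).trans (h' s hs)

lemma of_eventuallyEq (h : f =ᶠ[𝓝 x0] f') : SameJet x0 n f f' :=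
  fun s _ => (pdList_congr s h).eq_of_nhds

lemma pdList (t : List (Fin d)) (h : SameJet x0 (n + t.length) f f') :
    SameJet x0 n (pdList t f) (pdList t f') := fun s hs => by
  simpa only [pdList_append] using h (s ++ t) (by simp; omega)

lemma sum {ι : Type*} (t : Finset ι) {F G : ι → (Fin d → ℝ) → ℝ}
    (hF : ∀ r ∈ t, ContDiffAt ℝ n (F r) x0) (hG : ∀ r ∈ t, ContDiffAt ℝ n (G r) x0)
    (h : ∀ r ∈ t, SameJet x0 n (F r) (G r)) :
    SameJet x0 n (∑ r ∈ t, F r) (∑ r ∈ t, G r) := fun s hs => by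
  rw [(pdList_sum s t fun r hr => (hF r hr).of_le (Nat.cast_le.2 hs)).eq_of_nhds,
    (pdList_sum s t fun r hr => (hG r hr).of_le (Nat.cast_le.2 hs)).eq_of_nhds]
  simp only [Finset.sum_apply]
  exact Finset.sum_congr rfl fun r hr => h r hr s hs

lemma mul_left (ha : ContDiffAt ℝ n a x0) (hb : ContDiffAt ℝ n b x0)
    (hb' : ContDiffAt ℝ n b' x0) (h : SameJet x0 n b b') : SameJet x0 n (a * b) (a * b') := by
  intro s hs
  induction s using List.reverseRecOn generalizing n a b b' with
  | nil => exact congrArg (a x0 * ·) (h [] (Nat.zero_le n))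
  | append_singleton t g ih =>
    obtain ⟨m, rfl⟩ : ∃ m, n = m + 1 := ⟨n - 1, by simp at hs; omega⟩
    have ht : t.length ≤ m := by simpa using hs
    have leibniz : ∀ {c}, ContDiffAt ℝ (m + 1 : ℕ) c x0 → _root_.pdList (t ++ [g]) (a * c) x0 =
        _root_.pdList t (pdFun g a * c) x0 + _root_.pdList t (a * pdFun g c) x0 := by
      intro c hc
      have hc1 : ContDiffAt ℝ 1 c x0 := hc.of_le (Nat.cast_le.2 (by omega))
      have ha1 : ContDiffAt ℝ 1 a x0 := ha.of_le (Nat.cast_le.2 (by omega))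
      rw [pdList_append]
      refine (pdList_congr t (pdFun_mul g ha1 hc1)).eq_of_nhds.trans (pdList_add t ?_ ?_).eq_of_nhds
      · exact ((ha.pdFun g).mul (hc.of_le (Nat.cast_le.2 (by omega)))).of_le (Nat.cast_le.2 ht)
      · exact ((ha.of_le (Nat.cast_le.2 (by omega))).mul (hc.pdFun g)).of_le (Nat.cast_le.2 ht)
    have hm : m ≤ m + 1 := by omega
    rw [leibniz hb, leibniz hb',
      ih (ha.pdFun g) (hb.of_le (Nat.cast_le.2 hm)) (hb'.of_le (Nat.cast_le.2 hm)) (h.mono hm) ht,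
      ih (ha.of_le (Nat.cast_le.2 hm)) (hb.pdFun g) (hb'.pdFun g) (h.pdList [g]) ht]

end SameJet

section MultiIndex
variable {d : ℕ} {f : (Fin d → ℝ) → ℝ} {x : Fin d → ℝ}

def dirList (i : Fin d →₀ ℕ) : List (Fin d) :=
  (List.ofFn fun g => List.replicate (i g) g).flatten

lemma pdList_replicate (k : ℕ) (g : Fin d) : pdList (List.replicate k g) = (pdFun g)^[k] := by
  funext f
  induction k with
  | zero => rfl
  | succ k ih => rw [List.replicate_succ, pdList_cons, ih, Function.iterate_succ_apply']

lemma pdList_flatten (l : List (List (Fin d))) :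
    pdList l.flatten f = (l.map pdList).foldr (· ∘ ·) id f := by
  induction l generalizing f with
  | nil => rfl
  | cons s l ih => rw [List.flatten_cons, pdList_append, ih]; rfl

lemma pdMulti_eq_pdList (i : Fin d →₀ ℕ) : pdMulti i f = pdList (dirList i) f := by
  rw [dirList, pdList_flatten, List.map_ofFn, pdMulti]
  simp only [Function.comp_def, pdList_replicate]

lemma count_dirList (i : Fin d →₀ ℕ) (g : Fin d) : (dirList i).count g = i g := by
  simp [dirList, List.count_flatten, List.count_replicate, Function.comp_def, List.sum_ofFn]

lemma length_dirList (i : Fin d →₀ ℕ) : (dirList i).length = ∑ g, i g := by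
  simp [dirList, List.length_flatten, Function.comp_def, List.sum_ofFn]

lemma perm_dirList_toFinsupp (s : List (Fin d)) : s.Perm (dirList (Multiset.toFinsupp s)) :=
  List.perm_iff_count.2 fun g => by simp [count_dirList]

lemma mem_degLE {k : ℕ} {i : Fin d →₀ ℕ} : i ∈ degLE d k ↔ ∑ g, i g ≤ k := by
  refine Finset.mem_filter.trans ⟨And.right, fun h => ⟨Finset.mem_Iic.2 fun g => ?_, h⟩⟩
  simpa using (Finset.single_le_sum (fun _ _ => Nat.zero_le _) (Finset.mem_univ g)).trans h

lemma ContDiffAt.pdMulti {n : ℕ} (i : Fin d →₀ ℕ) (h : ContDiffAt ℝ (n + ∑ g, i g : ℕ) f x) :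
    ContDiffAt ℝ n (pdMulti i f) x := by
  rw [pdMulti_eq_pdList]
  exact ContDiffAt.pdList _ (by rwa [length_dirList])

lemma SameJet.pdMulti {x0 : Fin d → ℝ} {n : ℕ} {f' : (Fin d → ℝ) → ℝ} (i : Fin d →₀ ℕ)
    (h : SameJet x0 (n + ∑ g, i g) f f') : SameJet x0 n (pdMulti i f) (pdMulti i f') := by
  rw [pdMulti_eq_pdList, pdMulti_eq_pdList]
  exact SameJet.pdList (n := n) (dirList i) (by rwa [length_dirList])

end MultiIndex

section Monomial
variable {d : ℕ} {x0 : Fin d → ℝ}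

def mono (x0 : Fin d → ℝ) (i : Fin d →₀ ℕ) : (Fin d → ℝ) → ℝ :=
  fun x => ∏ g, (x g - x0 g) ^ i g

lemma contDiff_mono {n : WithTop ℕ∞} (i : Fin d →₀ ℕ) : ContDiff ℝ n (mono x0 i) := by
  unfold mono
  fun_prop

lemma pdFun_mono (g : Fin d) (i : Fin d →₀ ℕ) :
    pdFun g (mono x0 i) = (i g : ℝ) • mono x0 (i - Finsupp.single g 1) := by
  ext x
  have hfactor := fun h => ((hasFDerivAt_apply (𝕜 := ℝ) h x).sub_const (x0 h)).pow (i h)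
  unfold pdFun mono
  rw [(HasFDerivAt.finsetProd fun h _ => hfactor h).fderiv]
  have herase : ∏ h ∈ Finset.univ.erase g, (x h - x0 h) ^ (i h - Finsupp.single g 1 h) =
      ∏ h ∈ Finset.univ.erase g, (x h - x0 h) ^ i h :=
    Finset.prod_congr rfl fun h hh => by simp [(Finset.ne_of_mem_erase hh).symm]
  simp [Pi.single_apply, ← Finset.mul_prod_erase _ _ (Finset.mem_univ g), herase]
  ring

lemma pdList_mono (s : List (Fin d)) (i : Fin d →₀ ℕ) :
    pdList s (mono x0 i) =
      ((∏ g, (i g).descFactorial (s.count g) : ℕ) : ℝ) • mono x0 (i - Multiset.toFinsupp s) := by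
  induction s with
  | nil => ext; simp [pdList]
  | cons g s ih =>
    have hidx : i - Multiset.toFinsupp ↑(g :: s) =
        i - Multiset.toFinsupp ↑s - Finsupp.single g 1 := by
      ext h
      by_cases hgh : g = h
      · subst hgh; simp [Multiset.toFinsupp_apply]; omega
      · simp [Multiset.toFinsupp_apply, hgh]
    have hfactor : ∀ h, (i h).descFactorial ((g :: s).count h) =
        (i h).descFactorial (s.count h) * if g = h then i h - s.count h else 1 := by
      intro h
      by_cases hgh : g = h
      · subst hgh; simp [Nat.descFactorial_succ, mul_comm]
      · simp [hgh]
    rw [pdList_cons, ih, pdFun_const_smul, pdFun_mono, hidx, smul_smul,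
      Finset.prod_congr rfl fun h _ => hfactor h, Finset.prod_mul_distrib, Finset.prod_ite_eq]
    simp [Multiset.toFinsupp_apply]

lemma mono_self (i : Fin d →₀ ℕ) : mono x0 i x0 = if i = 0 then 1 else 0 := by
  split_ifs with hi
  · simp [mono, hi]
  · obtain ⟨g, hg⟩ := Finsupp.ne_iff.1 hi
    exact Finset.prod_eq_zero (Finset.mem_univ g) (by simpa using hg)

lemma pdList_mono_self (s : List (Fin d)) (i : Fin d →₀ ℕ) :
    pdList s (mono x0 i) x0 =
      if Multiset.toFinsupp s = i then ∏ g, ((i g).factorial : ℝ) else 0 := by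
  simp only [pdList_mono, Pi.smul_apply, mono_self, tsub_eq_zero_iff_le, smul_eq_mul]
  split_ifs with hle hs hs
  · subst hs; simp [Nat.descFactorial_self]
  · obtain ⟨g, hg⟩ : ∃ g, i g < s.count g := by
      by_contra! h
      exact hs (le_antisymm (fun g => by simpa using h g) hle)
    have hzero : ∏ g, (i g).descFactorial (s.count g) = 0 :=
      Finset.prod_eq_zero (Finset.mem_univ g) (Nat.descFactorial_eq_zero_iff_lt.2 hg)
    simp [hzero]
  · exact absurd hs.ge hle
  · simp

end Monomial

section Taylor
variable {d : ℕ} {x0 : Fin d → ℝ} {k : ℕ} {f f' : (Fin d → ℝ) → ℝ}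

lemma taylorFun_eq_sum (x0 : Fin d → ℝ) (k : ℕ) (f : (Fin d → ℝ) → ℝ) :
    taylorFun x0 k f =
      ∑ i ∈ degLE d k, (pdMulti i f x0 / ∏ g, ((i g).factorial : ℝ)) • mono x0 i := by
  ext x
  simp [taylorFun, mono, Finset.sum_apply]

lemma contDiff_taylorFun {n : WithTop ℕ∞} : ContDiff ℝ n (taylorFun x0 k f) := by
  unfold taylorFun
  fun_prop

lemma pdList_taylorFun_self (s : List (Fin d)) (hs : s.length ≤ k) :
    pdList s (taylorFun x0 k f) x0 = pdMulti (Multiset.toFinsupp s) f x0 := by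
  have hcard : ∑ g, s.count g = s.length := by
    simpa using
      Multiset.sum_count_eq_card (s := Finset.univ) (m := (s : Multiset (Fin d))) (by simp)
  have hmem : Multiset.toFinsupp (s : Multiset (Fin d)) ∈ degLE d k :=
    mem_degLE.2 (by simpa [Multiset.toFinsupp_apply, hcard] using hs)
  set a : (Fin d →₀ ℕ) → ℝ := fun i => pdMulti i f x0 / ∏ g, ((i g).factorial : ℝ)
  have hsmooth : ∀ i ∈ degLE d k, ContDiffAt ℝ s.length (a i • mono x0 i) x0 :=
    fun i _ => ((contDiff_mono i).const_smul (a i)).contDiffAt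
  rw [taylorFun_eq_sum, (pdList_sum s _ hsmooth).eq_of_nhds]
  simp only [Finset.sum_apply, pdList_const_smul, Pi.smul_apply, pdList_mono_self, smul_eq_mul,
    mul_ite, mul_zero, Finset.sum_ite_eq, hmem, if_true]
  exact div_mul_cancel₀ _ (by positivity)

lemma sameJet_taylorFun (h : ContDiffAt ℝ k f x0) : SameJet x0 k (taylorFun x0 k f) f :=
  fun s hs => by
    rw [pdList_taylorFun_self s hs, pdMulti_eq_pdList]
    exact (pdList_perm (perm_dirList_toFinsupp s) (h.of_le (Nat.cast_le.2 hs))).eq_of_nhds.symm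

lemma taylorFun_congr (h : SameJet x0 k f f') : taylorFun x0 k f = taylorFun x0 k f' := by
  ext x
  refine Finset.sum_congr rfl fun i hi => ?_
  rw [pdMulti_eq_pdList, pdMulti_eq_pdList, h _ (by rw [length_dirList]; exact mem_degLE.1 hi)]

lemma taylorFun_zero : taylorFun x0 k (fun _ => 0) = 0 := by
  ext x
  simp [taylorFun, pdMulti_eq_pdList, ← Pi.zero_def, pdList_zero]

end Taylor

lemma applyL_eq_sum {d : ℕ} (γ : ℕ) (c : (Fin d →₀ ℕ) → (Fin d → ℝ) → ℝ)
    (f : (Fin d → ℝ) → ℝ) : applyL γ c f = ∑ j ∈ degLE d γ, c j * pdMulti j f := by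
  ext x
  simp [applyL, Finset.sum_apply]

theorem stmt_13_general {d : ℕ} (x0 : Fin d → ℝ) (γ p : ℕ) (hp : γ ≤ p)
    (c : (Fin d →₀ ℕ) → (Fin d → ℝ) → ℝ)
    (hc : ∀ j ∈ degLE d γ, ContDiffAt ℝ (p - γ : ℕ) (c j) x0)
    (u : (Fin d → ℝ) → ℝ)
    (hu : ContDiffAt ℝ (p + γ : ℕ) u x0)
    (hLu : ∀ᶠ x in nhds x0, applyL γ c u x = 0) :
    taylorFun x0 (p - γ) (applyL γ c (taylorFun x0 p u)) = 0 := by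
  set n := p - γ
  have hn : ∀ j ∈ degLE d γ, n + ∑ g, j g ≤ p := fun j hj => by
    have := mem_degLE.1 hj
    omega
  have hT : SameJet x0 p (taylorFun x0 p u) u :=
    sameJet_taylorFun (hu.of_le (Nat.cast_le.2 (by omega)))
  have hTj : ∀ j, ContDiffAt ℝ n (pdMulti j (taylorFun x0 p u)) x0 := fun j =>
    ContDiffAt.pdMulti j contDiff_taylorFun.contDiffAt
  have huj : ∀ j ∈ degLE d γ, ContDiffAt ℝ n (pdMulti j u) x0 := fun j hj =>
    ContDiffAt.pdMulti j (hu.of_le (Nat.cast_le.2 (by have := hn j hj; omega)))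
  have hL : SameJet x0 n (applyL γ c (taylorFun x0 p u)) (applyL γ c u) := by
    rw [applyL_eq_sum, applyL_eq_sum]
    exact SameJet.sum _ (fun j hj => (hc j hj).mul (hTj j)) (fun j hj => (hc j hj).mul (huj j hj))
      fun j hj => SameJet.mul_left (hc j hj) (hTj j) (huj j hj) ((hT.mono (hn j hj)).pdMulti j)
  rw [taylorFun_congr (hL.trans (SameJet.of_eventuallyEq hLu)), taylorFun_zero]

/-- If `u ∈ C^{p+γ}` satisfies `L u = 0` near `x0`, then its degree-`p` Taylor
polynomial satisfies the quasi-Trefftz property `T_{p−γ}[L(T_p u)] = 0`. -/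
theorem stmt_13 {d : ℕ} (x0 : Fin d → ℝ) (γ p : ℕ) (hγ : 1 ≤ γ) (hp : γ ≤ p)
    (c : (Fin d →₀ ℕ) → (Fin d → ℝ) → ℝ)
    (hc : ∀ j ∈ degLE d γ, ContDiffAt ℝ (p - γ : ℕ) (c j) x0)
    (u : (Fin d → ℝ) → ℝ)
    (hu : ContDiffAt ℝ (p + γ : ℕ) u x0)
    (hLu : ∀ᶠ x in nhds x0, applyL γ c u x = 0) :
    taylorFun x0 (p - γ) (applyL γ c (taylorFun x0 p u)) = 0 :=
  stmt_13_general x0 γ p hp c hc u hu hLu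
end
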